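/- arXiv:2301.09078 — 5 statements merged into one kernel-verified Lean document; each statement's English description precedes it below -/
import Mathlib

section
/- Let φ : A → B be a homomorphism of finite groups and let P be a perfect subgroup of B contained in the image of φ. Then there is a unique smallest normal subgroup N of A whose image under φ contains P: that is, there exists a normal subgroup N of A with P ≤ φ(N) such that N ≤ M for every normal subgroup M of A with P ≤ φ(M). Moreover, this smallest subgroup N is perfect. -/
/-- Let `φ : A → B` be a homomorphism of finite groups and `P` a perfect
subgroup of `B` contained in the image of `φ`.  Then there is a (unique) smallest normal
subgroup `N` of `A` whose image under `φ` contains `P`, and this `N` is perfect. -/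
theorem smallest_normal_subgroup_covering_perfect
    {A B : Type*} [Group A] [Group B] [Finite A] [Finite B]
    (φ : A →* B) (P : Subgroup B) (hPperf : ⁅P, P⁆ = P) (hPle : P ≤ φ.range) :
    ∃ N : Subgroup A, N.Normal ∧ P ≤ N.map φ ∧
      (∀ M : Subgroup A, M.Normal → P ≤ M.map φ → N ≤ M) ∧ ⁅N, N⁆ = N := by
  set S : Set (Subgroup A) := {N | N.Normal ∧ P ≤ N.map φ} with hS
  have hSne : S.Nonempty := ⟨⊤, inferInstance, by rwa [← MonoidHom.range_eq_map]⟩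
  obtain ⟨N, hNS, hmin⟩ :=
    (Finite.wellFounded_of_trans_of_irrefl ((· < ·) : Subgroup A → Subgroup A → Prop)).has_min S hSne
  obtain ⟨hNnorm, hNle⟩ := hNS
  have key : ∀ M : Subgroup A, M.Normal → P ≤ M.map φ → N ≤ M := by
    intro M hMnorm hMle
    have hcn : (⁅N, M⁆ : Subgroup A).Normal := Subgroup.commutator_normal N M
    have hcle : P ≤ (⁅N, M⁆ : Subgroup A).map φ := by
      calc P = ⁅P, P⁆ := hPperf.symm
        _ ≤ (⁅N, M⁆ : Subgroup A).map φ :=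
          Subgroup.commutator_le_map_commutator hNle hMle
    have hleN : (⁅N, M⁆ : Subgroup A) ≤ N := Subgroup.commutator_le_left N M
    have heq : (⁅N, M⁆ : Subgroup A) = N := by
      by_contra h
      exact hmin ⁅N, M⁆ ⟨hcn, hcle⟩ (lt_of_le_of_ne hleN h)
    calc N = ⁅N, M⁆ := heq.symm
      _ ≤ M := Subgroup.commutator_le_right N M
  have hperf : (⁅N, N⁆ : Subgroup A) = N :=
    le_antisymm (Subgroup.commutator_le_left N N)
      (by
        have hcn : (⁅N, N⁆ : Subgroup A).Normal := Subgroup.commutator_normal N N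
        have hcle : P ≤ (⁅N, N⁆ : Subgroup A).map φ := by
          calc P = ⁅P, P⁆ := hPperf.symm
            _ ≤ (⁅N, N⁆ : Subgroup A).map φ :=
              Subgroup.commutator_le_map_commutator hNle hNle
        exact key _ hcn hcle)
  exact ⟨N, hNnorm, hNle, key, hperf⟩
end

section
/- Let G be a finite group with κ(G) = 1, let H be a subgroup of G with O^∞(G) ≤ H ≤ G, and let N be a subnormal subgroup of H. Then either O^∞(G) ≤ N or N ≤ O_∞(G). -/
/-- `κ(G) = 1`: the finite group `G` has exactly one nonabelian composition factor.
Equivalently, there are normal subgroups `A ≤ B` of `G` with `A` soluble, `G/B` soluble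
and `B/A` nonabelian simple.  (Solubility of `G/B` is expressed by the derived series of
`G` eventually landing in `B`.) -/
def KappaEqOne (G : Type*) [Group G] : Prop :=
  ∃ (A B : Subgroup G) (hA : A.Normal) (_hB : B.Normal), A ≤ B ∧
    IsSolvable ↥A ∧ (∃ n, derivedSeries G n ≤ B) ∧
    (letI := hA.subgroupOf B
     IsSimpleGroup (↥B ⧸ A.subgroupOf B) ∧
       ∃ x y : ↥B ⧸ A.subgroupOf B, x * y ≠ y * x)

/-- `N` is the soluble residual `O^∞(G)` of `G`: the smallest normal subgroup with
soluble quotient (solubility of `G/N` is expressed via the derived series of `G`). -/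
def IsSolubleResidual {G : Type*} [Group G] (N : Subgroup G) : Prop :=
  N.Normal ∧ (∃ n, derivedSeries G n ≤ N) ∧
    ∀ M : Subgroup G, M.Normal → (∃ n, derivedSeries G n ≤ M) → N ≤ M

/-- `R` is the soluble radical `O_∞(G)` of `G`: the largest soluble normal subgroup. -/
def IsSolubleRadical {G : Type*} [Group G] (R : Subgroup G) : Prop :=
  R.Normal ∧ IsSolvable ↥R ∧ ∀ M : Subgroup G, M.Normal → IsSolvable ↥M → M ≤ R

/-- `N` is subnormal in `H`: there is a finite chain `N = c 0 ⊴ c 1 ⊴ ⋯ ⊴ c m = H`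
in which each term is normal in the next. -/
def SubnormalIn {G : Type*} [Group G] (N H : Subgroup G) : Prop :=
  ∃ (m : ℕ) (c : ℕ → Subgroup G), c 0 = N ∧ c m = H ∧
    ∀ i < m, c i ≤ c (i + 1) ∧ ∀ g ∈ c (i + 1), ∀ x ∈ c i, g * x * g⁻¹ ∈ c i

/-!
Write `S = O^∞(G)` and `R = O_∞(G)`. If `A ≤ B` is the section of `G` with `B/A` simple, then
`S ≤ B` and `A ≤ R`; the image in `B/A` of any `M ≤ S` normalised by `S` is trivial or contains
that of `S`, so `M ≤ R` or `S ≤ MR`. In the second case `S ≤ M`, since `S` is perfect and `S/M` is a quotient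
of the soluble group `S ∩ R`. Let `C/R` be the centraliser of `SR/R` in `G/R`; it meets `SR/R`
in an abelian group and is soluble modulo it, so `C ≤ R`. Walking down the subnormal chain from
`H ≥ S`, a term `X ⊴ D` with `S ≤ D` gives `X ∩ S ⊴ S`, hence `S ≤ X` or
`[X, S] ≤ X ∩ S ≤ R`, i.e. `X ≤ C`; and once a term lies in `C`, all later ones do.
-/

open Subgroup Pointwise

section Solvable

variable {G Q : Type*} [Group G] [Group Q]

theorem commutator_eq_top_of_commutator_self_eq {S : Subgroup G} (hS : ⁅S, S⁆ = S) :
    commutator S = ⊤ := by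
  apply map_injective S.subtype_injective
  rw [commutator_def, map_commutator, ← MonoidHom.range_eq_map, range_subtype, hS]

theorem MonoidHom.ker_eq_top_of_commutator_eq_top [Group.IsSolvable Q]
    (hG : commutator G = ⊤) (f : G →* Q) : f.ker = ⊤ := by
  have hD : ∀ n, derivedSeries G n = ⊤ := fun n => by
    induction n with
    | zero => rfl
    | succ n ih => rw [derivedSeries_succ, ih, ← _root_.commutator_def, hG]
  obtain ⟨n, hn⟩ := Group.IsSolvable.solvable (G := Q)
  rw [eq_top_iff, ← Subgroup.map_eq_bot_iff, eq_bot_iff, ← hD n, ← hn]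
  exact map_derivedSeries_le_derivedSeries f n

theorem isSolvable_of_derivedSeries_le_ker (f : G →* Q) (hf : Function.Surjective f) {n : ℕ}
    (h : derivedSeries G n ≤ f.ker) : Group.IsSolvable Q :=
  ⟨n, by rw [← map_derivedSeries_eq hf, Subgroup.map_eq_bot_iff]; exact h⟩

theorem isSolvable_comap (f : G →* Q) [Group.IsSolvable f.ker] (Z : Subgroup Q)
    [Group.IsSolvable Z] : Group.IsSolvable (Z.comap f) :=
  Group.isSolvable_of_ker_le_range (inclusion (f.ker_le_comap Z)) (f.subgroupComap Z)
    fun x hx => ⟨⟨x, congrArg Subtype.val hx⟩, rfl⟩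

theorem isSolvable_centralizer_of_isSolvable_quotient (K : Subgroup G) [K.Normal]
    [Group.IsSolvable (G ⧸ K)] :
    Group.IsSolvable (centralizer (K : Set G)) := by
  set f := (QuotientGroup.mk' K).comp (centralizer (K : Set G)).subtype
  have : Group.IsSolvable f.ker := Group.isSolvable_of_comm fun x y => by
    have hx : (x : G) ∈ K := (QuotientGroup.eq_one_iff _).mp x.2
    exact Subtype.ext (Subtype.ext (mem_centralizer_iff.mp y.1.2 _ hx))
  exact Group.isSolvable_of_ker_le_range f.ker.subtype f (by rw [range_subtype])

end Solvable

section Perfect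

variable {G : Type*} [Group G]

theorem le_of_commutator_self_eq_of_le_sup {S M R : Subgroup G} [R.Normal]
    [Group.IsSolvable R] (hS : ⁅S, S⁆ = S) (hMS : M ≤ S) (hSM : S ≤ normalizer M)
    (hle : S ≤ M ⊔ R) : S ≤ M := by
  have : (M.subgroupOf S).Normal := (normal_subgroupOf_iff_le_normalizer hMS).mpr hSM
  have : Group.IsSolvable S.subtype.ker := by rw [ker_subtype]; infer_instance
  have : Group.IsSolvable (R.subgroupOf S) := isSolvable_comap S.subtype R
  have hsurj : Function.Surjective
      ((QuotientGroup.mk' (M.subgroupOf S)).comp (R.subgroupOf S).subtype) := by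
    intro q
    obtain ⟨s, rfl⟩ := QuotientGroup.mk'_surjective _ q
    obtain ⟨r, hr, m, hm, hrm⟩ : (s : G) ∈ (R : Set G) * (M : Set G) := by
      rw [← normal_mul, sup_comm]; exact hle s.2
    have hrS : r ∈ S := by
      rw [eq_mul_inv_of_mul_eq hrm]; exact mul_mem s.2 (inv_mem (hMS hm))
    refine ⟨⟨⟨r, hrS⟩, hr⟩, QuotientGroup.eq.mpr ?_⟩
    simpa [mem_subgroupOf, ← hrm] using hm
  have : Group.IsSolvable (S ⧸ M.subgroupOf S) := Group.isSolvable_of_surjective hsurj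
  have htop := (QuotientGroup.mk' (M.subgroupOf S)).ker_eq_top_of_commutator_eq_top
    (commutator_eq_top_of_commutator_self_eq hS)
  rw [QuotientGroup.ker_mk'] at htop
  exact fun s hs => htop.ge (mem_top (⟨s, hs⟩ : S))

end Perfect

section Simple

variable {G Q : Type*} [Group G] [Group Q] [IsSimpleGroup Q]

theorem IsSimpleGroup.eq_bot_or_le_of_le_normalizer {S M : Subgroup Q} [hS : S.Normal]
    (hMS : M ≤ S) (hSM : S ≤ normalizer M) : M = ⊥ ∨ S ≤ M := by
  rcases IsSimpleGroup.eq_bot_or_eq_top_of_normal S hS with rfl | rfl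
  · exact Or.inl (le_bot_iff.mp hMS)
  · have hM : M.Normal := normalizer_eq_top_iff.mp (top_le_iff.mp hSM)
    exact (IsSimpleGroup.eq_bot_or_eq_top_of_normal M hM).imp_right ge_of_eq

theorem le_ker_or_le_sup_ker_of_le_normalizer (f : G →* Q) (hf : Function.Surjective f)
    {S M : Subgroup G} [hS : S.Normal] (hMS : M ≤ S) (hSM : S ≤ normalizer M) :
    M ≤ f.ker ∨ S ≤ M ⊔ f.ker := by
  have : (S.map f).Normal := hS.map f hf
  refine (IsSimpleGroup.eq_bot_or_le_of_le_normalizer (map_mono hMS)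
    ((map_mono hSM).trans (le_normalizer_map f))).imp (M.map_eq_bot_iff).mp fun h => ?_
  rw [← comap_map_eq]
  exact map_le_iff_le_comap.mp h

end Simple

section SubnormalIn

variable {G : Type*} [Group G]

theorem SubnormalIn.induction_from_top {N H : Subgroup G} (hN : SubnormalIn N H)
    {P : Subgroup G → Prop} (top : P H)
    (step : ∀ X D : Subgroup G, X ≤ D → D ≤ normalizer X → P D → P X) : P N := by
  obtain ⟨m, c, rfl, rfl, hc⟩ := hN
  induction m generalizing c with
  | zero => exact top
  | succ m ih =>
    have ⟨hle, hnorm⟩ := hc 0 m.succ_pos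
    exact step _ _ hle (le_normalizer_iff.mpr hnorm)
      (ih (fun i => c (i + 1)) (fun i hi => hc (i + 1) (by omega)) top)

end SubnormalIn

section Kappa

variable {G : Type*} [Group G] {S R : Subgroup G}

theorem IsSolubleResidual.commutator_eq (hS : IsSolubleResidual S) : ⁅S, S⁆ = S := by
  obtain ⟨hSn, ⟨n, hn⟩, hmin⟩ := hS
  refine le_antisymm (commutator_le_left S S) (hmin _ (commutator_normal S S) ⟨n + 1, ?_⟩)
  rw [derivedSeries_succ]
  exact commutator_mono hn hn

theorem KappaEqOne.le_or_le_sup (hκ : KappaEqOne G) (hS : IsSolubleResidual S)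
    (hR : IsSolubleRadical R) {M : Subgroup G} (hMS : M ≤ S) (hSM : S ≤ normalizer M) :
    M ≤ R ∨ S ≤ M ⊔ R := by
  obtain ⟨A, B, hA, hB, -, hAsol, hGB, hsimple, -⟩ := hκ
  have hSB : S ≤ B := hS.2.2 B hB hGB
  have hAR : A ≤ R := hR.2.2 A hA hAsol
  have := hA.subgroupOf B
  have := hS.1.subgroupOf B
  rcases le_ker_or_le_sup_ker_of_le_normalizer (QuotientGroup.mk' (A.subgroupOf B))
      (QuotientGroup.mk'_surjective _) (S := S.subgroupOf B) (M := M.subgroupOf B)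
      (comap_mono hMS) ((comap_mono hSM).trans (le_normalizer_comap B.subtype)) with h | h <;>
    rw [QuotientGroup.ker_mk'] at h
  · exact Or.inl fun m hm => hAR (h (x := ⟨m, hSB (hMS hm)⟩) hm)
  · refine Or.inr fun s hs => ?_
    have := mem_map_of_mem B.subtype (h (x := ⟨s, hSB hs⟩) hs)
    rw [Subgroup.map_sup, subgroupOf_map_subtype, subgroupOf_map_subtype] at this
    exact sup_le_sup inf_le_left (inf_le_left.trans hAR) this

def centralizerModulo (S R : Subgroup G) [R.Normal] : Subgroup G :=
  (centralizer (S.map (QuotientGroup.mk' R) : Set (G ⧸ R))).comap (QuotientGroup.mk' R)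

theorem le_centralizerModulo_iff [R.Normal] {X : Subgroup G} :
    X ≤ centralizerModulo S R ↔ ⁅X, S⁆ ≤ R := by
  rw [centralizerModulo, ← map_le_iff_le_comap, ← commutator_eq_bot_iff_le_centralizer,
    ← map_commutator, Subgroup.map_eq_bot_iff, QuotientGroup.ker_mk']

theorem centralizerModulo_le [R.Normal] (hS : IsSolubleResidual S) (hR : IsSolubleRadical R) :
    centralizerModulo S R ≤ R := by
  obtain ⟨hSn, ⟨n, hn⟩, -⟩ := hS
  obtain ⟨-, hRsol, hRmax⟩ := hR
  set π := QuotientGroup.mk' R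
  have : (S.map π).Normal := hSn.map π (QuotientGroup.mk'_surjective R)
  have : Group.IsSolvable ((G ⧸ R) ⧸ S.map π) :=
    isSolvable_of_derivedSeries_le_ker ((QuotientGroup.mk' _).comp π)
      ((QuotientGroup.mk'_surjective _).comp (QuotientGroup.mk'_surjective R))
      (hn.trans fun s hs => (QuotientGroup.eq_one_iff _).mpr (mem_map_of_mem π hs))
  have : Group.IsSolvable π.ker := by rw [QuotientGroup.ker_mk']; exact hRsol
  have := isSolvable_centralizer_of_isSolvable_quotient (S.map π)
  exact hRmax _ (normal_centralizer.comap π) (isSolvable_comap π _)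

theorem KappaEqOne.le_or_le_centralizerModulo [R.Normal] (hκ : KappaEqOne G)
    (hS : IsSolubleResidual S) (hR : IsSolubleRadical R) {X D : Subgroup G} (hXD : X ≤ D)
    (hDX : D ≤ normalizer X) (hD : S ≤ D ∨ D ≤ centralizerModulo S R) :
    S ≤ X ∨ X ≤ centralizerModulo S R := by
  have := hS.1
  rcases hD with hSD | hDC
  · have hSX : S ≤ normalizer (X ⊓ S) :=
      le_inf (hSD.trans hDX) le_normalizer_of_normal |>.trans
        inf_normalizer_le_normalizer_inf
    rcases hκ.le_or_le_sup hS hR inf_le_right hSX with h | h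
    · exact Or.inr <| le_centralizerModulo_iff.mpr <|
        (le_inf (le_normalizer_iff_commutator_le_left.mp (hSD.trans hDX))
          (commutator_le_right X S)).trans h
    · have : Group.IsSolvable R := hR.2.1
      exact Or.inl <| (le_of_commutator_self_eq_of_le_sup hS.commutator_eq inf_le_right hSX
        h).trans inf_le_left
  · exact Or.inr (hXD.trans hDC)

end Kappa

theorem subnormal_dichotomy_of_kappa_one_general
    {G : Type*} [Group G] (hκ : KappaEqOne G)
    (Osr R : Subgroup G) (hO : IsSolubleResidual Osr) (hR : IsSolubleRadical R)
    (H N : Subgroup G) (hOH : Osr ≤ H) (hN : SubnormalIn N H) :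
    Osr ≤ N ∨ N ≤ R := by
  have := hR.1
  refine (hN.induction_from_top (P := fun X => Osr ≤ X ∨ X ≤ centralizerModulo Osr R)
    (Or.inl hOH) fun X D hXD hDX => hκ.le_or_le_centralizerModulo hO hR hXD hDX).imp_right
    fun hN => hN.trans (centralizerModulo_le hO hR)

/-- Let `G` be a finite group with `κ(G) = 1`, let
`O^∞(G) ≤ H ≤ G` and let `N` be a subnormal subgroup of `H`.  Then either
`O^∞(G) ≤ N` or `N ≤ O_∞(G)`. -/
theorem subnormal_dichotomy_of_kappa_one
    {G : Type*} [Group G] [Finite G] (hκ : KappaEqOne G)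
    (Osr R : Subgroup G) (hO : IsSolubleResidual Osr) (hR : IsSolubleRadical R)
    (H N : Subgroup G) (hOH : Osr ≤ H) (hN : SubnormalIn N H) :
    Osr ≤ N ∨ N ≤ R :=
  subnormal_dichotomy_of_kappa_one_general hκ Osr R hO hR H N hOH hN
end

section
/- Let G be a group and let K ≤ H ≤ G be subgroups. Then the left coset space G/K with its left-translation G-action is equivalent as a G-set to a standard extension of G/H with fibre H/K: there exist an action of G on (G/H) × (H/K) and a G-equivariant bijection π : (G/H) × (H/K) → G/K (with G acting on G/K by left translation) such that (a) the first-coordinate projection (G/H) × (H/K) → G/H is G-equivariant for the left-translation action on G/H, and (b) for all x, y ∈ G/H there exists g ∈ G with g·(x, b) = (y, b) for every b ∈ H/K. -/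
/-- Let `K ≤ H ≤ G` be subgroups.  Then the left coset space `G/K`,
with the left-translation action, is equivalent as a `G`-set to a standard extension of
`G/H` with fibre `H/K`: there are an action `s` of `G` on `(G/H) × (H/K)` and a
`G`-equivariant bijection `π : (G/H) × (H/K) → G/K` such that the first–coordinate
projection is `G`-equivariant, and for all `x, y ∈ G/H` there is `g ∈ G` with
`g • (x, b) = (y, b)` for every `b ∈ H/K`. -/
theorem coset_space_is_standard_extension
    {G : Type*} [Group G] (K H : Subgroup G) (hKH : K ≤ H) :
    ∃ s : G → (G ⧸ H) × (↥H ⧸ K.subgroupOf H) → (G ⧸ H) × (↥H ⧸ K.subgroupOf H),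
      (∀ p, s 1 p = p) ∧
      (∀ g₁ g₂ p, s (g₁ * g₂) p = s g₁ (s g₂ p)) ∧
      ∃ π : (G ⧸ H) × (↥H ⧸ K.subgroupOf H) ≃ (G ⧸ K),
        (∀ g p, π (s g p) = g • π p) ∧
        (∀ g p, (s g p).1 = g • p.1) ∧
        (∀ x y : G ⧸ H, ∃ g : G, ∀ b, s g (x, b) = (y, b)) := by
  classical
  set e := Subgroup.quotientEquivProdOfLE hKH with he
  refine ⟨fun g p => e (g • e.symm p), ?_, ?_, e.symm, ?_, ?_, ?_⟩
  · intro p; simp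
  · intro g₁ g₂ p; simp [mul_smul]
  · intro g p; simp
  · intro g p
    have key : ∀ (g : G) (q : G ⧸ K), (e (g • q)).1 = g • (e q).1 := by
      intro g q
      induction q using QuotientGroup.induction_on with
      | H a => rfl
    have := key g (e.symm p)
    simpa using this
  · intro x y
    refine ⟨y.out * x.out⁻¹, ?_⟩
    intro b
    induction b using QuotientGroup.induction_on with
    | H h =>
      have h1 : e.symm (x, (h : ↥H ⧸ K.subgroupOf H)) = QuotientGroup.mk (x.out * h) := rfl
      show e ((y.out * x.out⁻¹) • e.symm (x, (h : ↥H ⧸ K.subgroupOf H))) = (y, (h : ↥H ⧸ K.subgroupOf H))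
      have h2 : (y.out * x.out⁻¹) • (QuotientGroup.mk (x.out * h) : G ⧸ K)
          = QuotientGroup.mk (y.out * h) := by
        show QuotientGroup.mk ((y.out * x.out⁻¹) * (x.out * h)) = QuotientGroup.mk (y.out * h)
        congr 1
        group
      have hy : (QuotientGroup.mk (y.out * (h : G)) : G ⧸ H) = y := by
        rw [QuotientGroup.mk_mul_of_mem y.out h.2, QuotientGroup.out_eq']
      have h3 : e.symm (y, (h : ↥H ⧸ K.subgroupOf H)) = QuotientGroup.mk (y.out * h) := rfl
      rw [h1, h2, Equiv.apply_eq_iff_eq_symm_apply, h3]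
end

section
/- Let T be a thick tree, let G ≤ Aut(T), and let k ≥ 2. Suppose that G is 1-type-distance-transitive, and that for each of the two types t of vertices (the parity classes) there exists a path (v₁, v₂, …, v_k) of pairwise distinct, consecutively adjacent vertices in T with v₁ of type t, such that the pointwise stabilizer of {v₁, …, v_k} in G acts transitively on S_{v₂}(v₁,1), the set of neighbours of v₁ other than v₂. Then G is k-type-distance-transitive. -/
/-- The pointwise stabilizer of a set of vertices, inside the full symmetric group. -/
def ptStab {V : Type*} (s : Set V) : Subgroup (Equiv.Perm V) where
  carrier := {g | ∀ v ∈ s, g v = v}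
  one_mem' := by intro v _; rfl
  mul_mem' := by
    intro a b ha hb v hv
    simp only [Set.mem_setOf_eq] at *
    rw [Equiv.Perm.mul_apply, hb v hv, ha v hv]
  inv_mem' := by
    intro a ha v hv
    simp only [Set.mem_setOf_eq] at *
    calc a⁻¹ v = a⁻¹ (a v) := by rw [ha v hv]
      _ = v := a.symm_apply_apply v

/-- `G` consists of automorphisms of the graph `T`. -/
def PreservesAdj {V : Type*} (T : SimpleGraph V) (G : Subgroup (Equiv.Perm V)) : Prop :=
  ∀ g ∈ G, ∀ a b : V, T.Adj a b ↔ T.Adj (g a) (g b)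

/-- `G` is `k`-type-distance-transitive. -/
def TypeDistTrans {V : Type*} (T : SimpleGraph V) (G : Subgroup (Equiv.Perm V)) (k : ℕ) : Prop :=
  ∀ x y x' y' : V, T.dist x y = k → T.dist x' y' = k → Even (T.dist x x') →
    ∃ g ∈ G, g x = x' ∧ g y = y'

/-- The tree is thick: every vertex has at least three neighbours. -/
def Thick {V : Type*} (T : SimpleGraph V) : Prop :=
  ∀ v : V, ∃ a b c : V, T.Adj v a ∧ T.Adj v b ∧ T.Adj v c ∧ a ≠ b ∧ a ≠ c ∧ b ≠ c

/-!
Induction on `k`. Let `d(x, y) = d(x', y') = k + 1` with `x`, `x'` of the same type, and let `z`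
be the neighbour of `x` towards `y`. Take a path `v 0, …, v k` from the hypothesis with `v 0` of
the type of `z`. By `k`-type-distance-transitivity some `g, g' ∈ G` send `y, y'` to `v k` and
`x, x'` to neighbours of `v 0`, which differ from `v 1` because they lie at distance `k + 1`
from `v k`. Some `t` in the stabilizer of the path carries `g x` to `g' x'` and fixes `v k`,
so `g'⁻¹ * t * g` sends `(x, y)` to `(x', y')`.
-/

namespace SimpleGraph

variable {V W : Type*} {G : SimpleGraph V}

lemma Hom.edist_le {G' : SimpleGraph W} (f : G →g G') (u v : V) :
    G'.edist (f u) (f v) ≤ G.edist u v := by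
  by_cases h : G.Reachable u v
  · obtain ⟨p, hp⟩ := h.exists_walk_length_eq_edist
    rw [← hp, ← Walk.length_map f]
    exact SimpleGraph.edist_le _
  · simp [edist_eq_top_of_not_reachable h]

lemma Iso.dist_eq {G' : SimpleGraph W} (e : G ≃g G') (u v : V) :
    G'.dist (e u) (e v) = G.dist u v := by
  have h : G'.edist (e u) (e v) = G.edist u v :=
    le_antisymm (e.toHom.edist_le u v) (by simpa using e.symm.toHom.edist_le (e u) (e v))
  simp only [dist, h]

lemma exists_adj_dist_eq_of_dist_eq_succ {x y : V} {n : ℕ} (h : G.dist x y = n + 1) :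
    ∃ z, G.Adj x z ∧ G.dist z y = n := by
  obtain ⟨p, hp⟩ := exists_walk_of_dist_ne_zero (by omega : G.dist x y ≠ 0)
  cases p with
  | nil => simp at h
  | cons hadj q =>
    refine ⟨_, hadj, le_antisymm ?_ ?_⟩
    · have := dist_le q
      simp only [Walk.length_cons] at hp
      omega
    · have := hadj.reachable.dist_triangle_left y
      rw [dist_eq_one_iff_adj.mpr hadj] at this
      omega

lemma IsAcyclic.dist_eq_length_of_isPath (hG : G.IsAcyclic) {u v : V} {p : G.Walk u v}
    (hp : p.IsPath) : G.dist u v = p.length := by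
  obtain ⟨q, hq, hql⟩ := p.reachable.exists_path_of_dist
  have : p = q := congrArg Subtype.val ((hG.subsingleton_path u v).elim ⟨p, hp⟩ ⟨q, hq⟩)
  rw [this, hql]

lemma IsTree.even_dist_iff (hG : G.IsTree) (a b c : V) :
    Even (G.dist a c) ↔ Even (G.dist a b + G.dist b c) := by
  suffices key : ∀ {b c : V} (p : G.Walk b c), Even (G.dist a b + p.length + G.dist a c) by
    obtain ⟨p, hp⟩ := hG.connected.exists_walk_length_eq_dist b c
    have := key p
    rw [hp] at this
    simp only [Nat.even_iff] at this ⊢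
    omega
  intro b c p
  induction p with
  | nil => simp
  | cons hadj p ih =>
    rw [Walk.length_cons]
    rcases hG.dist_eq_dist_add_one_of_adj a hadj with h | h <;>
    · rw [Nat.even_iff] at ih ⊢; omega

lemma exists_walk_support_eq_map_range (v : ℕ → V) :
    ∀ n, (∀ i < n, G.Adj (v i) (v (i + 1))) →
      ∃ p : G.Walk (v 0) (v n), p.support = (List.range (n + 1)).map v
  | 0, _ => ⟨.nil, rfl⟩
  | n + 1, hadj => by
    obtain ⟨p, hp⟩ := exists_walk_support_eq_map_range v n fun i hi => hadj i (by omega)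
    exact ⟨p.concat (hadj n n.lt_add_one), by simp [hp, List.range_succ]⟩

lemma IsAcyclic.dist_eq_of_adj_succ_of_injOn (hG : G.IsAcyclic) (v : ℕ → V) (n : ℕ)
    (hadj : ∀ i < n, G.Adj (v i) (v (i + 1))) (hinj : Set.InjOn v (Set.Iic n)) :
    G.dist (v 0) (v n) = n := by
  obtain ⟨p, hp⟩ := exists_walk_support_eq_map_range v n hadj
  have hpath : p.IsPath := by
    rw [Walk.isPath_def, hp]
    refine List.nodup_range.map_on fun i hi j hj => hinj ?_ ?_ <;>
      simp_all
  have hlen : p.length = n := by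
    simpa [hp] using p.length_support.symm
  rw [hG.dist_eq_length_of_isPath hpath, hlen]

end SimpleGraph

section

variable {V : Type*} {T : SimpleGraph V} {G : Subgroup (Equiv.Perm V)}

lemma PreservesAdj.dist_apply (hG : PreservesAdj T G) {g : Equiv.Perm V} (hg : g ∈ G) (a b : V) :
    T.dist (g a) (g b) = T.dist a b :=
  SimpleGraph.Iso.dist_eq ⟨g, (hG g hg _ _).symm⟩ a b

def PathStabilizerTransitive (T : SimpleGraph V) (G : Subgroup (Equiv.Perm V)) (v : ℕ → V)
    (n : ℕ) : Prop :=
  (∀ i j, i < n → j < n → v i = v j → i = j) ∧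
  (∀ i, i + 1 < n → T.Adj (v i) (v (i + 1))) ∧
  (∀ w w' : V, T.Adj (v 0) w → T.Adj (v 0) w' → w ≠ v 1 → w' ≠ v 1 →
    ∃ g ∈ G, (∀ i < n, g (v i) = v i) ∧ g w = w')

lemma PathStabilizerTransitive.mono {v : ℕ → V} {m n : ℕ}
    (hv : PathStabilizerTransitive T G v n) (hmn : m ≤ n) : PathStabilizerTransitive T G v m := by
  obtain ⟨hinj, hadj, hstab⟩ := hv
  refine ⟨fun i j hi hj => hinj i j (by omega) (by omega), fun i hi => hadj i (by omega), ?_⟩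
  intro w w' hw hw' hw1 hw'1
  obtain ⟨g, hg, hfix, hgw⟩ := hstab w w' hw hw' hw1 hw'1
  exact ⟨g, hg, fun i hi => hfix i (by omega), hgw⟩

lemma PathStabilizerTransitive.dist_eq (hT : T.IsAcyclic) {v : ℕ → V} {n : ℕ}
    (hv : PathStabilizerTransitive T G v (n + 1)) {m : ℕ} (hm : m ≤ n) :
    T.dist (v m) (v n) = n - m := by
  obtain ⟨hinj, hadj, -⟩ := hv
  have hshift : Set.InjOn (fun i => v (m + i)) (Set.Iic (n - m)) := fun i hi j hj h => by
    simp only [Set.mem_Iic] at hi hj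
    have := hinj (m + i) (m + j) (by omega) (by omega) h
    omega
  have := hT.dist_eq_of_adj_succ_of_injOn (fun i => v (m + i)) (n - m)
    (fun i hi => hadj (m + i) (by omega)) hshift
  simpa [Nat.add_sub_cancel' hm] using this

lemma TypeDistTrans.exists_map_to_path (hT : T.IsTree) (hG : PreservesAdj T G) {k : ℕ}
    (hk : 1 ≤ k) (hTk : TypeDistTrans T G k) {v : ℕ → V}
    (hv : PathStabilizerTransitive T G v (k + 1)) {x y : V} (hxy : T.dist x y = k + 1)
    (hx : Odd (T.dist x (v 0))) :
    ∃ g ∈ G, g y = v k ∧ T.Adj (v 0) (g x) ∧ g x ≠ v 1 := by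
  obtain ⟨z, hxz, hzy⟩ := T.exists_adj_dist_eq_of_dist_eq_succ hxy
  have hz : Even (T.dist z (v 0)) := by
    rw [hT.even_dist_iff z x, T.dist_comm, T.dist_eq_one_iff_adj.mpr hxz]
    exact odd_one.add_odd hx
  have hv0 : T.dist (v 0) (v k) = k := by simpa using hv.dist_eq hT.isAcyclic k.zero_le
  obtain ⟨g, hg, hgz, hgy⟩ := hTk z y (v 0) (v k) hzy hv0 hz
  have hgx : T.dist (g x) (v k) = k + 1 := by rw [← hgy, hG.dist_apply hg, hxy]
  refine ⟨g, hg, hgy, hgz ▸ ((hG g hg x z).mp hxz).symm, fun h => ?_⟩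
  have hv1 : T.dist (v 1) (v k) = k - 1 := hv.dist_eq hT.isAcyclic hk
  rw [← h, hgx] at hv1
  omega

lemma TypeDistTrans.succ (hT : T.IsTree) (hG : PreservesAdj T G) {k : ℕ} (hk : 1 ≤ k)
    (hTk : TypeDistTrans T G k)
    (hpath : ∀ u, ∃ v : ℕ → V,
      Even (T.dist u (v 0)) ∧ PathStabilizerTransitive T G v (k + 1)) :
    TypeDistTrans T G (k + 1) := by
  intro x y x' y' hxy hx'y' hxx'
  obtain ⟨z, hxz, -⟩ := T.exists_adj_dist_eq_of_dist_eq_succ hxy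
  obtain ⟨v, hzv, hv⟩ := hpath z
  have hx : Odd (T.dist x (v 0)) := by
    rw [← Nat.not_even_iff_odd, hT.even_dist_iff x z, T.dist_eq_one_iff_adj.mpr hxz,
      Nat.not_even_iff_odd]
    exact hzv.one_add
  have hx' : Odd (T.dist x' (v 0)) := by
    rw [← Nat.not_even_iff_odd, hT.even_dist_iff x' x, Nat.not_even_iff_odd, T.dist_comm]
    exact hxx'.add_odd hx
  obtain ⟨g, hg, hgy, hgx, hgx1⟩ := hTk.exists_map_to_path hT hG hk hv hxy hx
  obtain ⟨g', hg', hg'y, hg'x, hg'x1⟩ := hTk.exists_map_to_path hT hG hk hv hx'y' hx'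
  obtain ⟨t, ht, htfix, htx⟩ := hv.2.2 _ _ hgx hg'x hgx1 hg'x1
  refine ⟨g'⁻¹ * t * g, G.mul_mem (G.mul_mem (G.inv_mem hg') ht) hg, ?_, ?_⟩
  · simp [htx]
  · rw [Equiv.Perm.mul_apply, Equiv.Perm.mul_apply, hgy, htfix k k.lt_add_one, ← hg'y,
      Equiv.Perm.inv_def, Equiv.symm_apply_apply]

end

theorem k_type_distance_transitive_of_path_stabilizer_general
    {V : Type*} (T : SimpleGraph V) (hconn : T.Connected) (hacyc : T.IsAcyclic)
    (G : Subgroup (Equiv.Perm V)) (hG : PreservesAdj T G)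
    (k : ℕ) (hk : 2 ≤ k) (h1 : TypeDistTrans T G 1)
    (hpath : ∀ u : V, ∃ v : ℕ → V,
      Even (T.dist u (v 0)) ∧
      (∀ i j, i < k → j < k → v i = v j → i = j) ∧
      (∀ i, i + 1 < k → T.Adj (v i) (v (i + 1))) ∧
      (∀ w w' : V, T.Adj (v 0) w → T.Adj (v 0) w' → w ≠ v 1 → w' ≠ v 1 →
        ∃ g ∈ G, (∀ i < k, g (v i) = v i) ∧ g w = w')) :
    TypeDistTrans T G k := by
  have hT : T.IsTree := ⟨hconn, hacyc⟩
  suffices ∀ j, 1 ≤ j → j ≤ k → TypeDistTrans T G j from this k (by omega) le_rfl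
  intro j hj
  induction j, hj using Nat.le_induction with
  | base => exact fun _ => h1
  | succ j hj ih =>
    intro hjk
    refine ih (by omega) |>.succ hT hG hj fun u => ?_
    obtain ⟨v, hu, hv⟩ := hpath u
    exact ⟨v, hu, PathStabilizerTransitive.mono hv hjk⟩

/-- If `G` is 1-type-distance-transitive on the thick tree `T`, `k ≥ 2`,
and for each of the two types there is a path `(v₁, …, v_k)` starting at a vertex of that
type whose pointwise stabilizer in `G` acts transitively on the neighbours of `v₁` other
than `v₂`, then `G` is `k`-type-distance-transitive. -/
theorem k_type_distance_transitive_of_path_stabilizer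
    {V : Type*} (T : SimpleGraph V) (hconn : T.Connected) (hacyc : T.IsAcyclic)
    (hthick : Thick T)
    (G : Subgroup (Equiv.Perm V)) (hG : PreservesAdj T G)
    (k : ℕ) (hk : 2 ≤ k) (h1 : TypeDistTrans T G 1)
    (hpath : ∀ u : V, ∃ v : ℕ → V,
      Even (T.dist u (v 0)) ∧
      (∀ i j, i < k → j < k → v i = v j → i = j) ∧
      (∀ i, i + 1 < k → T.Adj (v i) (v (i + 1))) ∧
      (∀ w w' : V, T.Adj (v 0) w → T.Adj (v 0) w' → w ≠ v 1 → w' ≠ v 1 →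
        ∃ g ∈ G, (∀ i < k, g (v i) = v i) ∧ g w = w')) :
    TypeDistTrans T G k :=
  k_type_distance_transitive_of_path_stabilizer_general T hconn hacyc G hG k hk h1 hpath
end

section
/- Let T be a thick locally finite tree, let G ≤ Aut(T) be type-distance-transitive, label the two types (parity classes) of vertices 0 and 1, let t ∈ {0,1}, and let k ≥ 1. Assume: (a) for every vertex c of type 1−t and every vertex v with d(v,c) = k we have O(c,w) ≤ Θ(v,c,1), where w is the neighbour of c on the geodesic from c to v; and (b) if k ≥ 2, for every vertex c of type t and every vertex v with d(v,c) = k−1 we have O(c,w) ≤ Θ(v,c,1). Then for every vertex c of type t and every vertex v with d(v,c) = k we have O(c,w) ≤ Θ(v,c,0). -/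
/-- `N` is the soluble residual `O^∞(P)` of the subgroup `P`. -/
def IsSolubleResidualIn {X : Type*} [Group X] (P N : Subgroup X) : Prop :=
  N ≤ P ∧ (N.subgroupOf P).Normal ∧ (∃ n, derivedSeries ↥P n ≤ N.subgroupOf P) ∧
    ∀ M : Subgroup X, M ≤ P → (M.subgroupOf P).Normal →
      (∃ n, derivedSeries ↥P n ≤ M.subgroupOf P) → N ≤ M

/-- `Θ(v, c, i)`: the local action on `S_v(c,1) = S(c,1) ∖ {w}` of the pointwise
stabilizer in `G` of `{c} ∪ B^v_i(c)`. -/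
def Theta {V : Type*} (T : SimpleGraph V) (G : Subgroup (Equiv.Perm V)) (c w : V)
    (res : ↥(G ⊓ ptStab {c} ⊓ ptStab {w}) →* Equiv.Perm {u : V // T.Adj c u ∧ u ≠ w})
    (v : V) (i : ℕ) : Subgroup (Equiv.Perm {u : V // T.Adj c u ∧ u ≠ w}) :=
  Subgroup.map res
    ((ptStab {u : V | T.dist v u = T.dist v c + i ∧
        T.dist v c + T.dist c u ≠ T.dist v u}).comap
      (G ⊓ ptStab {c} ⊓ ptStab {w}).subtype)

/-!
Let `v'` be the neighbour of `v` towards `c`. By (b), or trivially when `k = 1`, every element of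
`O(c,w)` is the local action at `c` of some `g ∈ K^{v'}_1(c)`. As `O(c,w)` is perfect, `g` can be
taken arbitrarily deep in the derived series of `K^{v'}_1(c)`, so at each of the finitely many
branch vertices `p` (those with `d(v,p) = k - 1` and `d(v',p) = k`, which have type `1 - t`) the
local action of `g` lies in the soluble residual at `p`, hence in `Θ(v',p,1)` by (a). Gluing the
elements of `K^{v'}_1(p)` that undo `g` on the children of the branch vertices and composing with
`g` gives an element of `K^v_0(c)` acting like `g` around `c`. The gluing works because in a thick
tree an automorphism fixing `z` and `B^o_1(z)` fixes the ball of radius `d(o,z) + 1` about `o`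
except for the children of `z`.
-/

section SolubleResidual

variable {X : Type*} [Group X]

theorem IsSolubleResidualIn.unique {P N N' : Subgroup X} (h : IsSolubleResidualIn P N)
    (h' : IsSolubleResidualIn P N') : N = N' :=
  le_antisymm (h.2.2.2 N' h'.1 h'.2.1 h'.2.2.1) (h'.2.2.2 N h.1 h.2.1 h.2.2.1)

theorem isSolubleResidualIn_map_derivedSeries {P : Subgroup X} {n : ℕ}
    (hn : ∀ m, n ≤ m → derivedSeries P n = derivedSeries P m) :
    IsSolubleResidualIn P ((derivedSeries P n).map P.subtype) := by
  have hof : ((derivedSeries P n).map P.subtype).subgroupOf P = derivedSeries P n :=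
    Subgroup.comap_map_eq_self_of_injective P.subtype_injective _
  refine ⟨Subgroup.map_subtype_le _, by rw [hof]; exact derivedSeries_normal _ _, ⟨n, hof.ge⟩, ?_⟩
  rintro M - - ⟨m, hm⟩
  calc (derivedSeries P n).map P.subtype
      = (derivedSeries P (max n m)).map P.subtype := by rw [hn _ (le_max_left n m)]
    _ ≤ (M.subgroupOf P).map P.subtype :=
      Subgroup.map_mono ((derivedSeries_antitone P (le_max_right n m)).trans hm)
    _ ≤ M := by rw [Subgroup.subgroupOf_map_subtype]; exact inf_le_left

theorem exists_derivedSeries_eq [Finite X] (P : Subgroup X) :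
    ∃ n, ∀ m, n ≤ m → derivedSeries P n = derivedSeries P m :=
  WellFoundedLT.antitone_chain_condition (derivedSeries_antitone P)

theorem exists_isSolubleResidualIn [Finite X] (P : Subgroup X) :
    ∃ N, IsSolubleResidualIn P N :=
  let ⟨_, hn⟩ := exists_derivedSeries_eq P
  ⟨_, isSolubleResidualIn_map_derivedSeries hn⟩

theorem IsSolubleResidualIn.commutator_eq_self [Finite X] {P N : Subgroup X}
    (h : IsSolubleResidualIn P N) : ⁅N, N⁆ = N := by
  obtain ⟨n, hn⟩ := exists_derivedSeries_eq P
  rw [h.unique (isSolubleResidualIn_map_derivedSeries hn), ← Subgroup.map_commutator,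
    ← derivedSeries_succ, ← hn (n + 1) n.le_succ]

theorem IsSolubleResidualIn.exists_map_derivedSeries_le {P N : Subgroup X}
    (h : IsSolubleResidualIn P N) {A : Type*} [Group A] (f : A →* X) (hf : f.range ≤ P) :
    ∃ n₀, ∀ n, n₀ ≤ n → (derivedSeries A n).map f ≤ N := by
  obtain ⟨n₀, hn₀⟩ := h.2.2.1
  refine ⟨n₀, fun n hn => ?_⟩
  rintro _ ⟨a, ha, rfl⟩
  exact hn₀ (derivedSeries_antitone P hn
    (map_derivedSeries_le_derivedSeries (f.codRestrict P fun a => hf ⟨a, rfl⟩) n ⟨a, ha, rfl⟩))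

theorem le_map_derivedSeries_of_commutator_eq {A : Type*} [Group A] (f : A →* X)
    {S : Subgroup X} (hS : ⁅S, S⁆ = S) (hSf : S ≤ f.range) (n : ℕ) :
    S ≤ (derivedSeries A n).map f := by
  induction n with
  | zero => rwa [derivedSeries_zero, ← MonoidHom.range_eq_map]
  | succ n ih =>
    rw [derivedSeries_succ, Subgroup.map_commutator]
    calc S = ⁅S, S⁆ := hS.symm
      _ ≤ _ := Subgroup.commutator_mono ih ih

theorem exists_preimage_forall_mem_of_commutator_eq {A : Type*} [Group A] (f : A →* X)
    {S : Subgroup X} (hS : ⁅S, S⁆ = S) (hSf : S ≤ f.range) {ι : Type*} [Finite ι]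
    {Y : ι → Type*} [∀ i, Group (Y i)] (φ : ∀ i, A →* Y i) {P N : ∀ i, Subgroup (Y i)}
    (hN : ∀ i, IsSolubleResidualIn (P i) (N i)) (hφ : ∀ i, (φ i).range ≤ P i) {x : X}
    (hx : x ∈ S) : ∃ a, f a = x ∧ ∀ i, φ i a ∈ N i := by
  choose n hn using fun i => (hN i).exists_map_derivedSeries_le (φ i) (hφ i)
  obtain ⟨m, hm⟩ := (Set.finite_range n).bddAbove
  obtain ⟨a, ha, rfl⟩ := le_map_derivedSeries_of_commutator_eq f hS hSf m hx
  exact ⟨a, rfl, fun i => hn i m (hm ⟨i, rfl⟩) ⟨a, ha, rfl⟩⟩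

end SolubleResidual

theorem Subgroup.exists_mem_eqOn_of_pairwise_disjoint {V ι : Type*} [Finite ι]
    (G : Subgroup (Equiv.Perm V)) {R : Set V} {A : ι → Set V}
    (hA : Pairwise (Function.onFun Disjoint A)) (hAR : ∀ i, A i ⊆ R) {f : ι → Equiv.Perm V} (hfG : ∀ i, f i ∈ G)
    (hmaps : ∀ i, Set.MapsTo (f i) (A i) (A i)) (hfix : ∀ i, ∀ x ∈ R, x ∉ A i → f i x = x) :
    ∃ g ∈ G, (∀ i, ∀ x ∈ A i, g x = f i x) ∧ ∀ x ∈ R, (∀ i, x ∉ A i) → g x = x := by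
  classical
  have := Fintype.ofFinite ι
  suffices H : ∀ s : Finset ι, ∃ g ∈ G, (∀ i ∈ s, ∀ x ∈ A i, g x = f i x) ∧
      ∀ x ∈ R, (∀ i ∈ s, x ∉ A i) → g x = x by
    obtain ⟨g, hg, hA, hR⟩ := H Finset.univ
    exact ⟨g, hg, fun i => hA i (Finset.mem_univ i), fun x hx hxA => hR x hx fun i _ => hxA i⟩
  intro s
  induction s using Finset.induction_on with
  | empty => exact ⟨1, one_mem G, by simp, fun _ _ _ => rfl⟩
  | insert j s hjs ih =>
    obtain ⟨g, hg, hgA, hgR⟩ := ih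
    have hout : ∀ i ∈ s, ∀ x ∈ A i, x ∉ A j := fun i hi x hx =>
      Set.disjoint_left.mp (hA (ne_of_mem_of_not_mem hi hjs)) hx
    refine ⟨f j * g, mul_mem (hfG j) hg, fun i hi x hx => ?_, fun x hx hxA => ?_⟩
    · rcases Finset.mem_insert.mp hi with rfl | hi
      · rw [Equiv.Perm.mul_apply, hgR x (hAR i hx) fun l hl hxl => hout l hl x hxl hx]
      · rw [Equiv.Perm.mul_apply, hgA i hi x hx,
          hfix j _ (hAR i (hmaps i hx)) (hout i hi _ (hmaps i hx))]
    · rw [Equiv.Perm.mul_apply, hgR x hx fun i hi => hxA i (Finset.mem_insert_of_mem hi),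
        hfix j x hx (hxA j (Finset.mem_insert_self j s))]

namespace SimpleGraph

variable {V : Type*} {T : SimpleGraph V}

theorem IsAcyclic.length_eq_dist_of_isPath (hT : T.IsAcyclic) {x y : V} {P : T.Walk x y}
    (hP : P.IsPath) : P.length = T.dist x y := by
  obtain ⟨Q, hQ, hQlen⟩ := P.reachable.exists_path_of_dist
  have : P = Q := congrArg Subtype.val ((hT.subsingleton_path x y).elim ⟨P, hP⟩ ⟨Q, hQ⟩)
  rw [this, hQlen]

theorem Connected.dist_add_dist_eq_of_mem_support (hconn : T.Connected) {x y z : V}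
    {P : T.Walk x y} (hP : P.length = T.dist x y) (hz : z ∈ P.support) :
    T.dist x z + T.dist z y = T.dist x y := by
  classical
  have hsplit := congrArg Walk.length (P.take_spec hz)
  rw [Walk.length_append] at hsplit
  have := dist_le (P.takeUntil z hz)
  have := dist_le (P.dropUntil z hz)
  have := hconn.dist_triangle (u := x) (v := z) (w := y)
  omega

theorem Connected.exists_adj_dist_add_one_eq (hconn : T.Connected) {x y : V} (hxy : x ≠ y) :
    ∃ z, T.Adj x z ∧ T.dist z y + 1 = T.dist x y := by
  obtain ⟨P, hP⟩ := hconn.exists_walk_length_eq_dist x y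
  cases P with
  | nil => exact absurd rfl hxy
  | @cons _ z _ hxz W =>
    have := dist_le W
    have := hconn.dist_triangle (u := x) (v := z) (w := y)
    rw [dist_eq_one_iff_adj.mpr hxz] at this
    rw [Walk.length_cons] at hP
    exact ⟨z, hxz, by omega⟩

theorem Connected.finite_setOf_dist_eq (hconn : T.Connected)
    (hlf : ∀ u : V, (T.neighborSet u).Finite) (v : V) (n : ℕ) :
    {u : V | T.dist v u = n}.Finite := by
  induction n with
  | zero =>
    refine (Set.finite_singleton v).subset fun u hu => ?_
    exact (hconn.dist_eq_zero_iff.mp hu).symm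
  | succ n ih =>
    refine (ih.biUnion fun x _ => hlf x).subset fun u hu => ?_
    have hu : T.dist u v = n + 1 := by rw [dist_comm]; exact hu
    obtain ⟨z, huz, hz⟩ := hconn.exists_adj_dist_add_one_eq (x := u) (y := v)
      (by rintro rfl; simp at hu)
    exact Set.mem_biUnion (show T.dist v z = n by rw [dist_comm]; omega) huz.symm

theorem Connected.dist_apply_apply (hconn : T.Connected) {g : Equiv.Perm V}
    (hg : ∀ a b, T.Adj a b ↔ T.Adj (g a) (g b)) (a b : V) :
    T.dist (g a) (g b) = T.dist a b := by
  let φ : T ≃g T := ⟨g, (hg _ _).symm⟩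
  obtain ⟨P, hP⟩ := hconn.exists_walk_length_eq_dist a b
  obtain ⟨Q, hQ⟩ := hconn.exists_walk_length_eq_dist (g a) (g b)
  have h₁ : T.dist (g a) (g b) ≤ P.length := (dist_le (P.map φ.toHom)).trans_eq (P.length_map _)
  have h₂ : T.dist (g.symm (g a)) (g.symm (g b)) ≤ Q.length :=
    (dist_le (Q.map φ.symm.toHom)).trans_eq (Q.length_map _)
  simp only [Equiv.symm_apply_apply] at h₂
  omega

namespace IsTree

theorem even_dist_add_dist_add_dist (hT : T.IsTree) (o x y : V) :
    Even (T.dist o x + T.dist o y + T.dist x y) := by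
  suffices H : ∀ {x y : V} (W : T.Walk x y), Even (T.dist o x + T.dist o y + W.length) by
    obtain ⟨W, hW⟩ := hT.connected.exists_walk_length_eq_dist x y
    simpa [hW] using H W
  intro x y W
  induction W with
  | nil => simp
  | @cons a b _ hab W ih =>
    rw [Walk.length_cons]
    rcases hT.dist_eq_dist_add_one_of_adj o hab with h | h <;>
      · rw [Nat.even_iff] at ih ⊢; omega

theorem dist_eq_dist_add_one_of_between (hT : T.IsTree) {a b x z : V} (hab : T.Adj a b)
    (hx : T.dist x b = T.dist x a + 1) (hz : T.dist x z + T.dist z a = T.dist x a) :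
    T.dist z b = T.dist z a + 1 := by
  rcases hT.dist_eq_dist_add_one_of_adj z hab with h | h
  · have := hT.connected.dist_triangle (u := x) (v := z) (w := b)
    omega
  · exact h

/-- The edge `ab` separates `x`, on the side of `a`, from `y`, on the side of `b`. -/
theorem dist_eq_dist_add_one_add_dist (hT : T.IsTree) {a b x y : V} (hab : T.Adj a b)
    (hx : T.dist x b = T.dist x a + 1) (hy : T.dist y a = T.dist y b + 1) :
    T.dist x y = T.dist x a + 1 + T.dist b y := by
  obtain ⟨P, hP⟩ := hT.connected.exists_walk_length_eq_dist x a
  obtain ⟨Q, hQ⟩ := hT.connected.exists_walk_length_eq_dist b y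
  have hside_a : ∀ z ∈ P.support, T.dist z b = T.dist z a + 1 := fun z hz =>
    hT.dist_eq_dist_add_one_of_between hab hx (hT.connected.dist_add_dist_eq_of_mem_support hP hz)
  have hside_b : ∀ z ∈ Q.support, T.dist z a = T.dist z b + 1 := by
    intro z hz
    have := hT.connected.dist_add_dist_eq_of_mem_support hQ hz
    refine hT.dist_eq_dist_add_one_of_between hab.symm hy ?_
    rw [dist_comm (u := y), dist_comm (u := z) (v := b), dist_comm (u := y) (v := b)]
    omega
  have hpath : (P.append (Walk.cons hab Q)).IsPath := by
    rw [Walk.isPath_def, Walk.support_append, Walk.support_cons, List.tail_cons,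
      List.nodup_append]
    refine ⟨(P.isPath_of_length_eq_dist hP).support_nodup,
      (Q.isPath_of_length_eq_dist hQ).support_nodup, ?_⟩
    rintro z hzP _ hzQ rfl
    have := hside_a z hzP
    have := hside_b z hzQ
    omega
  rw [← hT.isAcyclic.length_eq_dist_of_isPath hpath, Walk.length_append, Walk.length_cons, hP,
    hQ]
  ring

theorem dist_eq_dist_add_one_of_between_of_ne (hT : T.IsTree) {c w m y : V} (hcw : T.Adj c w)
    (hy : T.dist c y = T.dist w y + 1) (hm : T.dist c m + T.dist m y = T.dist c y) (hmc : m ≠ c) :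
    T.dist c m = T.dist w m + 1 := by
  have := T.dist_comm (u := c) (v := m)
  have := T.dist_comm (u := w) (v := m)
  rcases hT.dist_eq_dist_add_one_of_adj m hcw with h | h
  · omega
  · have := T.dist_comm (u := c) (v := y)
    have := T.dist_comm (u := w) (v := y)
    have := hT.dist_eq_dist_add_one_add_dist hcw (x := m) (y := y) h (by omega)
    exact absurd (hT.connected.dist_eq_zero_iff.mp (by omega)) hmc

theorem eq_of_adj_of_dist_add_one_eq (hT : T.IsTree) {o u y y' : V} (hy : T.Adj u y)
    (hy' : T.Adj u y') (h : T.dist o y + 1 = T.dist o u) (h' : T.dist o y' + 1 = T.dist o u) :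
    y = y' := by
  have huy' := dist_eq_one_iff_adj.mpr hy'.symm
  rcases hT.dist_eq_dist_add_one_of_adj y' hy.symm with h'' | h''
  · have := hT.dist_eq_dist_add_one_add_dist hy.symm (x := o) (y := y') (by omega) h''
    omega
  · exact (hT.connected.dist_eq_zero_iff.mp (by omega : T.dist y' y = 0)).symm

theorem eq_of_adj_of_adj (hT : T.IsTree) {x x' y₁ y₂ : V} (h₁ : T.Adj x y₁) (h₂ : T.Adj x y₂)
    (h₁' : T.Adj x' y₁) (h₂' : T.Adj x' y₂) (hne : y₁ ≠ y₂) : x = x' := by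
  have hd : ∀ {x}, T.Adj x y₁ → T.Adj x y₂ → T.dist y₁ x + 1 = T.dist y₁ y₂ := by
    intro x h₁ h₂
    have := dist_eq_one_iff_adj.mpr h₁.symm
    rcases hT.dist_eq_dist_add_one_of_adj y₁ h₂ with h | h
    · exact absurd (hT.connected.dist_eq_zero_iff.mp (by omega)) hne
    · omega
  exact hT.eq_of_adj_of_dist_add_one_eq h₂.symm h₂'.symm (hd h₁ h₂) (hd h₁' h₂')

theorem eq_or_dist_add_dist_eq_of_adj (hT : T.IsTree) {o u y z : V} (huy : T.Adj u y)
    (hy : T.dist o y = T.dist o u + 1) (hz : T.dist o z + T.dist z y = T.dist o y) :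
    z = y ∨ T.dist o z + T.dist z u = T.dist o u := by
  rcases hT.dist_eq_dist_add_one_of_adj z huy with h | h
  · have := hT.dist_eq_dist_add_one_add_dist huy (x := o) (y := z) hy h
    exact Or.inl (hT.connected.dist_eq_zero_iff.mp (by rw [dist_comm]; omega)).symm
  · exact Or.inr (by omega)

theorem exists_adj_adj_dist_eq (hT : T.IsTree) (hthick : Thick T) (o u : V) :
    ∃ y₁ y₂, T.Adj u y₁ ∧ T.Adj u y₂ ∧ y₁ ≠ y₂ ∧
      T.dist o y₁ = T.dist o u + 1 ∧ T.dist o y₂ = T.dist o u + 1 := by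
  obtain ⟨a, b, c, ha, hb, hc, hab, hac, hbc⟩ := hthick u
  have far : ∀ {y y'}, T.Adj u y → T.Adj u y' → y ≠ y' → T.dist o u = T.dist o y + 1 →
      T.dist o y' = T.dist o u + 1 := fun hy hy' hne h =>
    (hT.dist_eq_dist_add_one_of_adj o hy').resolve_left fun h' =>
      hne (hT.eq_of_adj_of_dist_add_one_eq hy hy' h.symm h'.symm)
  rcases hT.dist_eq_dist_add_one_of_adj o ha with h | h
  · exact ⟨b, c, hb, hc, hbc, far ha hb hab h, far ha hc hac h⟩
  rcases hT.dist_eq_dist_add_one_of_adj o hb with h' | h'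
  · exact ⟨a, c, ha, hc, hac, h, far hb hc hbc h'⟩
  · exact ⟨a, b, ha, hb, hab, h, h'⟩

end IsTree

end SimpleGraph

/-- The paper's `B^v_i(c)`. -/
def outerSphere {V : Type*} (T : SimpleGraph V) (v c : V) (i : ℕ) : Set V :=
  {u | T.dist v u = T.dist v c + i ∧ T.dist v c + T.dist c u ≠ T.dist v u}

/-- The paper's `K^v_i(c)`. -/
def outerStabilizer {V : Type*} (T : SimpleGraph V) (G : Subgroup (Equiv.Perm V)) (v c : V)
    (i : ℕ) : Subgroup (Equiv.Perm V) :=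
  G ⊓ ptStab (insert c (outerSphere T v c i))

section OuterSphere

variable {V : Type*} {T : SimpleGraph V}

theorem mem_outerStabilizer {G : Subgroup (Equiv.Perm V)} {v c : V} {i : ℕ}
    {g : Equiv.Perm V} :
    g ∈ outerStabilizer T G v c i ↔ g ∈ G ∧ g c = c ∧ ∀ u ∈ outerSphere T v c i, g u = u := by
  simp [outerStabilizer, ptStab, Subgroup.mem_inf]

namespace SimpleGraph.IsTree

/-- Downward induction on `d(o, u)`: by thickness `u` has two children, which are fixed, and `u`
is their only common neighbour. -/
theorem apply_eq_self_of_dist_le (hT : T.IsTree) (hthick : Thick T) {g : Equiv.Perm V}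
    (hg : ∀ a b, T.Adj a b ↔ T.Adj (g a) (g b)) {o z : V} {r : ℕ} (hz : g z = z)
    (hsphere : ∀ u, T.dist o u = r → T.dist o z + T.dist z u ≠ T.dist o u → g u = u)
    {u : V} (hu : T.dist o u ≤ r) (huz : T.dist o z + T.dist z u ≠ T.dist o u) : g u = u := by
  obtain ⟨m, hm⟩ := Nat.exists_eq_add_of_le hu
  induction m generalizing u with
  | zero => exact hsphere u hm.symm huz
  | succ m ih =>
    obtain ⟨y₁, y₂, hy₁, hy₂, hne, hd₁, hd₂⟩ := hT.exists_adj_adj_dist_eq hthick o u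
    have hfix : ∀ y, T.Adj u y → T.dist o y = T.dist o u + 1 → g y = y := by
      intro y huy hy
      by_cases hyz : y = z
      · rw [hyz, hz]
      refine ih (by omega) (fun hzy => ?_) (by omega)
      rcases hT.eq_or_dist_add_dist_eq_of_adj huy hy hzy with h | h
      · exact hyz h.symm
      · exact huz h
    refine (hT.eq_of_adj_of_adj hy₁ hy₂ ?_ ?_ hne).symm
    · exact hfix y₁ hy₁ hd₁ ▸ (hg u y₁).mp hy₁
    · exact hfix y₂ hy₂ hd₂ ▸ (hg u y₂).mp hy₂

theorem apply_eq_self_of_forall_outerSphere (hT : T.IsTree) (hthick : Thick T)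
    {g : Equiv.Perm V} (hg : ∀ a b, T.Adj a b ↔ T.Adj (g a) (g b)) {o z : V} (hz : g z = z)
    (hB : ∀ u ∈ outerSphere T o z 1, g u = u) {u : V} (hu : T.dist o u ≤ T.dist o z + 1)
    (hchild : ¬ (T.Adj z u ∧ T.dist o u = T.dist o z + 1)) : g u = u := by
  by_cases hbehind : T.dist o z + T.dist z u = T.dist o u
  · obtain h | h : T.dist z u = 0 ∨ T.dist z u = 1 := by omega
    · rwa [← hT.connected.dist_eq_zero_iff.mp h]
    · exact absurd ⟨dist_eq_one_iff_adj.mp h, by omega⟩ hchild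
  · exact hT.apply_eq_self_of_dist_le hthick hg hz (fun u h₁ h₂ => hB u ⟨h₁, h₂⟩) hu hbehind

end SimpleGraph.IsTree

end OuterSphere

section LocalAction

variable {V : Type*} {T : SimpleGraph V} {G : Subgroup (Equiv.Perm V)}

theorem mem_inf_ptStab_pair {c w : V} {g : Equiv.Perm V} :
    g ∈ G ⊓ ptStab {c} ⊓ ptStab {w} ↔ g ∈ G ∧ g c = c ∧ g w = w := by
  simp [ptStab, Subgroup.mem_inf, and_assoc]

theorem mem_theta_iff
    {res : ∀ c w : V, ↥(G ⊓ ptStab {c} ⊓ ptStab {w}) →* Equiv.Perm {u : V // T.Adj c u ∧ u ≠ w}}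
    (hres : ∀ (c w : V) (g : ↥(G ⊓ ptStab {c} ⊓ ptStab {w})) (u : {u : V // T.Adj c u ∧ u ≠ w}),
      ((res c w g) u : V) = (g : Equiv.Perm V) (u : V))
    {c w v : V} {i : ℕ} {σ : Equiv.Perm {u : V // T.Adj c u ∧ u ≠ w}} :
    σ ∈ Theta T G c w (res c w) v i ↔
      ∃ g ∈ outerStabilizer T G v c i, g w = w ∧ ∀ x, (σ x : V) = g x := by
  constructor
  · rintro ⟨g, hgB, rfl⟩
    obtain ⟨hgG, hgc, hgw⟩ := mem_inf_ptStab_pair.mp g.2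
    exact ⟨g, mem_outerStabilizer.mpr ⟨hgG, hgc, hgB⟩, hgw, hres c w g⟩
  · rintro ⟨g, hg, hgw, hgσ⟩
    obtain ⟨hgG, hgc, hgB⟩ := mem_outerStabilizer.mp hg
    refine ⟨⟨g, mem_inf_ptStab_pair.mpr ⟨hgG, hgc, hgw⟩⟩, hgB, ?_⟩
    ext x
    rw [hres, hgσ]

theorem theta_self {c w : V}
    (res : ↥(G ⊓ ptStab {c} ⊓ ptStab {w}) →* Equiv.Perm {u : V // T.Adj c u ∧ u ≠ w})
    (i : ℕ) : Theta T G c w res c i = res.range := by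
  rw [MonoidHom.range_eq_map, Theta]
  congr 1
  exact eq_top_iff.mpr fun g _ u hu => (hu.2 (by simp)).elim

theorem exists_lift_and_corrections
    {res : ∀ c w : V, ↥(G ⊓ ptStab {c} ⊓ ptStab {w}) →* Equiv.Perm {u : V // T.Adj c u ∧ u ≠ w}}
    (hres : ∀ (c w : V) (g : ↥(G ⊓ ptStab {c} ⊓ ptStab {w})) (u : {u : V // T.Adj c u ∧ u ≠ w}),
      ((res c w g) u : V) = (g : Equiv.Perm V) (u : V))
    (hlf : ∀ u : V, (T.neighborSet u).Finite) {c w v : V}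
    {Os : Subgroup (Equiv.Perm {u : V // T.Adj c u ∧ u ≠ w})}
    (hOs : IsSolubleResidualIn (res c w).range Os) (hOsθ : Os ≤ Theta T G c w (res c w) v 1)
    {ι : Type*} [Finite ι] (p q : ι → V)
    (hpq : ∀ g ∈ outerStabilizer T G v c 1, g w = w → ∀ i, g (p i) = p i ∧ g (q i) = q i)
    (hloc : ∀ i Os', IsSolubleResidualIn (res (p i) (q i)).range Os' →
      Os' ≤ Theta T G (p i) (q i) (res (p i) (q i)) v 1)
    {σ : Equiv.Perm {u : V // T.Adj c u ∧ u ≠ w}} (hσ : σ ∈ Os) :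
    ∃ g ∈ outerStabilizer T G v c 1, g w = w ∧ (∀ x, (σ x : V) = g x) ∧
      ∀ i, ∃ h ∈ outerStabilizer T G v (p i) 1,
        ∀ u, T.Adj (p i) u → u ≠ q i → h u = g⁻¹ u := by
  have hfin : ∀ a b : V, Finite {u : V // T.Adj a u ∧ u ≠ b} := fun a b =>
    ((hlf a).subset fun _ hu => hu.1).to_subtype
  set H := G ⊓ ptStab {c} ⊓ ptStab {w}
  set K : Subgroup H := (ptStab (outerSphere T v c 1)).comap H.subtype
  have hK : ∀ a : K, ((a : H) : Equiv.Perm V) ∈ outerStabilizer T G v c 1 ∧ (a : H).1 w = w := by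
    intro a
    obtain ⟨hG, hc, hw⟩ := mem_inf_ptStab_pair.mp (a : H).2
    exact ⟨mem_outerStabilizer.mpr ⟨hG, hc, a.2⟩, hw⟩
  let φ : ∀ i, K →* Equiv.Perm {u : V // T.Adj (p i) u ∧ u ≠ q i} := fun i =>
    (res (p i) (q i)).comp ((H.subtype.comp K.subtype).codRestrict _ fun a =>
      mem_inf_ptStab_pair.mpr ⟨(hK a).1.1, hpq _ (hK a).1 (hK a).2 i⟩)
  have hN : ∀ i, ∃ N, IsSolubleResidualIn (res (p i) (q i)).range N := fun i =>
    have := hfin (p i) (q i); exists_isSolubleResidualIn _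
  choose N hN using hN
  have := hfin c w
  obtain ⟨a, rfl, ha⟩ := exists_preimage_forall_mem_of_commutator_eq ((res c w).comp K.subtype)
    hOs.commutator_eq_self (by rwa [MonoidHom.range_comp, Subgroup.range_subtype]) φ hN
    (fun _ => by rintro _ ⟨a, rfl⟩; exact ⟨_, rfl⟩) hσ
  refine ⟨_, (hK a).1, (hK a).2, hres c w a, fun i => ?_⟩
  obtain ⟨h, hh, -, hhφ⟩ := (mem_theta_iff hres).mp (hloc i (N i) (hN i) (inv_mem (ha i)))
  refine ⟨h, hh, fun u hu hne => ?_⟩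
  rw [← hhφ ⟨u, hu, hne⟩, Equiv.Perm.eq_inv_iff_eq]
  exact (hres _ _ _ _).symm.trans (congrArg Subtype.val ((φ i a).apply_symm_apply _))

end LocalAction

section Branch

variable {V : Type*} {T : SimpleGraph V}

theorem SimpleGraph.Connected.mapsTo_setOf_adj_dist_eq (hconn : T.Connected) {g : Equiv.Perm V}
    (hg : ∀ a b, T.Adj a b ↔ T.Adj (g a) (g b)) {o p : V} (ho : g o = o) (hp : g p = p)
    (n : ℕ) : Set.MapsTo g {u | T.Adj p u ∧ T.dist o u = n} {u | T.Adj p u ∧ T.dist o u = n} :=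
  fun u ⟨hpu, hu⟩ => ⟨hp ▸ (hg p u).mp hpu, by rw [← ho, hconn.dist_apply_apply hg]; exact hu⟩

theorem SimpleGraph.Connected.exists_branch_adj (hconn : T.Connected) {v v' u : V} {k : ℕ}
    (hvv' : T.Adj v v') (huv : u ≠ v) (hu : T.dist v u = k) (hu' : T.dist v' u = k + 1) :
    ∃ p, T.Adj p u ∧ T.dist v p + 1 = k ∧ T.dist v' p = k := by
  obtain ⟨p, hup, hp⟩ := hconn.exists_adj_dist_add_one_eq huv
  have := hconn.dist_triangle (u := v') (v := p) (w := u)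
  have := hconn.dist_triangle (u := v') (v := v) (w := p)
  rw [dist_eq_one_iff_adj.mpr hup.symm, dist_eq_one_iff_adj.mpr hvv'.symm] at *
  rw [T.dist_comm] at hu hp
  exact ⟨p, hup.symm, by omega, by omega⟩

namespace SimpleGraph.IsTree

theorem dist_add_one_eq_of_branch (hT : T.IsTree) {v v' c p : V} {k : ℕ} (hvv' : T.Adj v v')
    (hvc : T.dist v c = k) (hv'c : T.dist v' c + 1 = k) (hp : T.dist v p + 1 = k)
    (hp' : T.dist v' p = k) : T.dist c p + 1 = 2 * k := by
  have := T.dist_comm (u := c) (v := v)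
  have := T.dist_comm (u := c) (v := v')
  have := T.dist_comm (u := p) (v := v)
  have := T.dist_comm (u := p) (v := v')
  have := hT.dist_eq_dist_add_one_add_dist hvv'.symm (x := c) (y := p) (by omega) (by omega)
  omega

theorem apply_eq_self_of_branch (hT : T.IsTree) {c w v v' p : V} {k : ℕ} {g : Equiv.Perm V}
    (hwv : T.dist c v = T.dist w v + 1) (hvv' : T.Adj v v') (hvc : T.dist v c = k)
    (hv'c : T.dist v' c + 1 = k) (hp : T.dist v p + 1 = k) (hp' : T.dist v' p = k)
    (hgw : g w = w) (hgB : ∀ u ∈ outerSphere T v' c 1, g u = u) : g p = p := by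
  have hcp := hT.dist_add_one_eq_of_branch hvv' hvc hv'c hp hp'
  rcases (by omega : k = 1 ∨ 2 ≤ k) with rfl | hk
  · have hpv : v = p := hT.connected.dist_eq_zero_iff.mp (by omega)
    have hwv : w = v := hT.connected.dist_eq_zero_iff.mp (by rw [dist_comm] at hvc; omega)
    rw [← hpv, ← hwv, hgw]
  · exact hgB p ⟨by omega, by omega⟩

theorem exists_mem_eqOn_children (hT : T.IsTree) (hthick : Thick T)
    (hlf : ∀ u : V, (T.neighborSet u).Finite) {G : Subgroup (Equiv.Perm V)}
    (hG : PreservesAdj T G) {o : V} {k : ℕ} (h : V → Equiv.Perm V)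
    (hh : ∀ p, T.dist o p = k → h p ∈ outerStabilizer T G o p 1) :
    ∃ H ∈ G, (∀ x, T.dist o x ≤ k → H x = x) ∧
      ∀ p u, T.dist o p = k → T.Adj p u → T.dist o u = k + 1 → H u = h p u := by
  let ι := {p : V // T.dist o p = k}
  have : Finite ι := (hT.connected.finite_setOf_dist_eq hlf o k).to_subtype
  let A : ι → Set V := fun p => {u | T.Adj p u ∧ T.dist o u = k + 1}
  have hh' := fun p : ι => mem_outerStabilizer.mp (hh p p.2)
  have hhfix : ∀ p : ι, ∀ x, T.dist o x ≤ k + 1 → x ∉ A p → h p x = x := fun p x hx hxA =>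
    hT.apply_eq_self_of_forall_outerSphere hthick (hG _ (hh' p).1) (hh' p).2.1 (hh' p).2.2
      (by rw [p.2]; exact hx) (by rw [p.2]; exact hxA)
  obtain ⟨H, hHG, hHA, hHfix⟩ := G.exists_mem_eqOn_of_pairwise_disjoint
    (R := {x | T.dist o x ≤ k + 1}) (A := A) (f := fun p => h p)
    (fun p p' hne => Set.disjoint_left.mpr fun u ⟨hpu, hu⟩ ⟨hp'u, _⟩ => hne <| Subtype.ext <|
      hT.eq_of_adj_of_dist_add_one_eq hpu.symm hp'u.symm (by rw [p.2]; omega)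
        (by rw [p'.2]; omega))
    (fun _ _ hu => le_of_eq hu.2) (fun p => (hh' p).1)
    (fun p => hT.connected.mapsTo_setOf_adj_dist_eq (hG _ (hh' p).1)
      (hhfix p o (by simp) fun ho => by have := ho.2; simp at this) (hh' p).2.1 _) hhfix
  refine ⟨H, hHG, fun x hx => hHfix x (show T.dist o x ≤ k + 1 by omega) fun p hxA => ?_,
    fun p u hp hpu hu => hHA ⟨p, hp⟩ u ⟨hpu, hu⟩⟩
  have := hxA.2
  omega

/-- The element `f` is `H * g`, where `H` glues together corrections at the branch vertices `p`
which undo on the children of `p` what `g` does there. -/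
theorem exists_mem_outerStabilizer_zero_of_corrections (hT : T.IsTree) (hthick : Thick T)
    (hlf : ∀ u : V, (T.neighborSet u).Finite) {G : Subgroup (Equiv.Perm V)}
    (hG : PreservesAdj T G) {c w v v' : V} {k : ℕ} (hcw : T.Adj c w)
    (hwv : T.dist c v = T.dist w v + 1) (hvv' : T.Adj v v') (hvc : T.dist v c = k)
    (hv'c : T.dist v' c + 1 = k) {g : Equiv.Perm V} (hg : g ∈ outerStabilizer T G v' c 1)
    (hgw : g w = w)
    (hcorr : ∀ p, T.dist v p + 1 = k → T.dist v' p = k → ∃ h ∈ outerStabilizer T G v' p 1,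
      ∀ u, T.Adj p u → T.dist v' u = k + 1 → h u = g⁻¹ u) :
    ∃ f ∈ outerStabilizer T G v c 0, f w = w ∧ ∀ u, T.Adj c u → f u = g u := by
  obtain ⟨hgG, hgc, hgB⟩ := mem_outerStabilizer.mp hg
  have hgT := hG g hgG
  have hgv' : g v' = v' :=
    hT.apply_eq_self_of_forall_outerSphere hthick hgT hgc hgB (by simp) (by simp)
  have hcorr' : ∀ p, ∃ h ∈ outerStabilizer T G v' p 1, T.dist v p + 1 = k → T.dist v' p = k →
      ∀ u, T.Adj p u → T.dist v' u = k + 1 → h u = g⁻¹ u := by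
    intro p
    by_cases hp : T.dist v p + 1 = k ∧ T.dist v' p = k
    · obtain ⟨h, hh, hhg⟩ := hcorr p hp.1 hp.2
      exact ⟨h, hh, fun _ _ => hhg⟩
    · exact ⟨1, one_mem _, fun h₁ h₂ => absurd ⟨h₁, h₂⟩ hp⟩
  choose h hhK hhg using hcorr'
  obtain ⟨H, hHG, hHk, hHh⟩ :=
    hT.exists_mem_eqOn_children hthick hlf hG (o := v') (k := k) h fun p _ => hhK p
  have hnbr : ∀ u, T.Adj c u → T.dist v' u ≤ k := fun u hcu =>
    (hT.connected.dist_triangle (v := c)).trans (by rw [dist_eq_one_iff_adj.mpr hcu]; omega)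
  refine ⟨H * g, mem_outerStabilizer.mpr ⟨mul_mem hHG hgG, ?_, ?_⟩, ?_, ?_⟩
  · rw [Equiv.Perm.mul_apply, hgc, hHk c (by omega)]
  · rintro u ⟨hu, -⟩
    rw [hvc, add_zero] at hu
    rw [Equiv.Perm.mul_apply]
    have := T.dist_comm (u := u) (v := v)
    have := T.dist_comm (u := u) (v := v')
    rcases hT.dist_eq_dist_add_one_of_adj u hvv' with hside | hside
    · rw [hT.apply_eq_self_of_forall_outerSphere hthick hgT hgc hgB (by omega) (by omega),
        hHk u (by omega)]
    · obtain ⟨p, hpu, hpv, hpv'⟩ := hT.connected.exists_branch_adj hvv'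
        (by rintro rfl; simp at hu; omega) hu (by omega)
      obtain ⟨hgup, hgu⟩ := hT.connected.mapsTo_setOf_adj_dist_eq hgT hgv'
        (hT.apply_eq_self_of_branch hwv hvv' hvc hv'c hpv hpv' hgw hgB) (k + 1) ⟨hpu, by omega⟩
      rw [hHh p _ hpv' hgup hgu, hhg p hpv hpv' _ hgup hgu]
      exact g.symm_apply_apply u
  · rw [Equiv.Perm.mul_apply, hgw, hHk w (hnbr w hcw)]
  · intro u hcu
    rw [Equiv.Perm.mul_apply, hHk _ (hnbr _ (hgc ▸ (hgT c u).mp hcu))]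

end SimpleGraph.IsTree

end Branch

theorem le_theta_zero_of_le_theta_one {V : Type*} {T : SimpleGraph V} (hT : T.IsTree)
    (hthick : Thick T) (hlf : ∀ u : V, (T.neighborSet u).Finite)
    {G : Subgroup (Equiv.Perm V)} (hG : PreservesAdj T G)
    {res : ∀ c w : V, ↥(G ⊓ ptStab {c} ⊓ ptStab {w}) →* Equiv.Perm {u : V // T.Adj c u ∧ u ≠ w}}
    (hres : ∀ (c w : V) (g : ↥(G ⊓ ptStab {c} ⊓ ptStab {w})) (u : {u : V // T.Adj c u ∧ u ≠ w}),
      ((res c w g) u : V) = (g : Equiv.Perm V) (u : V))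
    {c w v v' : V} {k : ℕ} (hcw : T.Adj c w) (hwv : T.dist c v = T.dist w v + 1)
    (hvv' : T.Adj v v') (hvc : T.dist v c = k) (hv'c : T.dist v' c + 1 = k)
    {Os : Subgroup (Equiv.Perm {u : V // T.Adj c u ∧ u ≠ w})}
    (hOs : IsSolubleResidualIn (res c w).range Os) (hOsθ : Os ≤ Theta T G c w (res c w) v' 1)
    (hloc : ∀ p q, T.dist v p + 1 = k → T.dist v' p = k → T.Adj p q →
      T.dist p v' = T.dist q v' + 1 → ∀ Os', IsSolubleResidualIn (res p q).range Os' →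
        Os' ≤ Theta T G p q (res p q) v' 1) :
    Os ≤ Theta T G c w (res c w) v 0 := by
  intro σ hσ
  let ι := {p : V // T.dist v p + 1 = k ∧ T.dist v' p = k}
  have : Finite ι :=
    ((hT.connected.finite_setOf_dist_eq hlf v' k).subset fun _ hp => hp.2).to_subtype
  choose q hq hqv' using fun p : ι => hT.connected.exists_adj_dist_add_one_eq (x := p) (y := v')
    fun h => by have := p.2.2; rw [h, T.dist_self] at this; omega
  have hqv'' : ∀ p : ι, T.dist v' (q p) + 1 = k := fun p => by
    have := T.dist_comm (u := v') (v := q p)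
    have := T.dist_comm (u := v') (v := (p : V))
    have := p.2.2
    have := hqv' p
    omega
  have hpq : ∀ g ∈ outerStabilizer T G v' c 1, g w = w → ∀ p : ι, g p = p ∧ g (q p) = q p := by
    intro g hg hgw p
    obtain ⟨hgG, hgc, hgB⟩ := mem_outerStabilizer.mp hg
    have := hqv'' p
    exact ⟨hT.apply_eq_self_of_branch hwv hvv' hvc hv'c p.2.1 p.2.2 hgw hgB,
      hT.apply_eq_self_of_forall_outerSphere hthick (hG g hgG) hgc hgB (by omega) (by omega)⟩
  obtain ⟨g, hg, hgw, hgσ, hh⟩ := exists_lift_and_corrections hres hlf hOs hOsθ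
    (fun p : ι => (p : V)) q hpq (fun p => hloc p (q p) p.2.1 p.2.2 (hq p) (hqv' p).symm) hσ
  obtain ⟨f, hf, hfw, hfg⟩ := hT.exists_mem_outerStabilizer_zero_of_corrections hthick hlf hG
    hcw hwv hvv' hvc hv'c hg hgw fun p hp hp' => by
      obtain ⟨h, hh', hhg⟩ := hh ⟨p, hp, hp'⟩
      refine ⟨h, hh', fun u hpu hu => hhg u hpu ?_⟩
      rintro rfl
      have := hqv'' ⟨p, hp, hp'⟩
      omega
  exact (mem_theta_iff hres).mpr ⟨f, hf, hfw, fun x => (hgσ x).trans (hfg x x.2.1).symm⟩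

theorem type_swap_soluble_residual_general
    {V : Type*} (T : SimpleGraph V) (hconn : T.Connected) (hacyc : T.IsAcyclic)
    (hthick : Thick T) (hlf : ∀ u : V, (T.neighborSet u).Finite)
    (G : Subgroup (Equiv.Perm V)) (hG : PreservesAdj T G)
    (o : V) (k : ℕ)
    (res : ∀ c w : V,
      ↥(G ⊓ ptStab {c} ⊓ ptStab {w}) →* Equiv.Perm {u : V // T.Adj c u ∧ u ≠ w})
    (hres : ∀ (c w : V) (g : ↥(G ⊓ ptStab {c} ⊓ ptStab {w}))
      (u : {u : V // T.Adj c u ∧ u ≠ w}),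
      ((res c w g) u : V) = (g : Equiv.Perm V) (u : V))
    (ha : ∀ c v w : V, Odd (T.dist o c) → T.dist v c = k → T.Adj c w →
      T.dist c v = T.dist w v + 1 →
      ∀ Os : Subgroup (Equiv.Perm {u : V // T.Adj c u ∧ u ≠ w}),
        IsSolubleResidualIn (res c w).range Os → Os ≤ Theta T G c w (res c w) v 1)
    (hb : 2 ≤ k → ∀ c v w : V, Even (T.dist o c) → T.dist v c = k - 1 → T.Adj c w →
      T.dist c v = T.dist w v + 1 →
      ∀ Os : Subgroup (Equiv.Perm {u : V // T.Adj c u ∧ u ≠ w}),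
        IsSolubleResidualIn (res c w).range Os → Os ≤ Theta T G c w (res c w) v 1) :
    ∀ c v w : V, Even (T.dist o c) → T.dist v c = k → T.Adj c w →
      T.dist c v = T.dist w v + 1 →
      ∀ Os : Subgroup (Equiv.Perm {u : V // T.Adj c u ∧ u ≠ w}),
        IsSolubleResidualIn (res c w).range Os → Os ≤ Theta T G c w (res c w) v 0 := by
  intro c v w hc hvc hcw hwv Os hOs
  have hT : T.IsTree := ⟨hconn, hacyc⟩
  obtain ⟨v', hvv', hv'c⟩ := hconn.exists_adj_dist_add_one_eq (x := v) (y := c)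
    (by rintro rfl; simp at hwv)
  rw [hvc] at hv'c
  have hOsθ : Os ≤ Theta T G c w (res c w) v' 1 := by
    rcases (by omega : k = 1 ∨ 2 ≤ k) with rfl | hk
    · obtain rfl : v' = c := hconn.dist_eq_zero_iff.mp (by omega)
      rw [theta_self]
      exact hOs.1
    · refine hb hk c v' w hc (by omega) hcw ?_ Os hOs
      refine hT.dist_eq_dist_add_one_of_between_of_ne hcw hwv ?_ ?_
      · have := SimpleGraph.dist_eq_one_iff_adj.mpr hvv'.symm
        have := T.dist_comm (u := c) (v := v')
        have := T.dist_comm (u := c) (v := v)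
        omega
      · rintro rfl; simp at hv'c; omega
  refine le_theta_zero_of_le_theta_one hT hthick hlf hG hres hcw hwv hvv' hvc hv'c hOs hOsθ
    fun p q hp hp' hpq hq => ha p v' q ?_ hp' hpq hq
  have hcp := hT.dist_add_one_eq_of_branch hvv' hvc hv'c hp hp'
  have hpar := hT.even_dist_add_dist_add_dist o c p
  rw [Nat.even_iff] at hc hpar
  rw [Nat.odd_iff]
  omega

/-- type swap.  Label the type of the base vertex `o` as type `t`.
Assume (a) for every vertex `c` of type `1−t` and every `v` with `d(v,c) = k` we have
`O(c,w) ≤ Θ(v,c,1)`, and (b) if `k ≥ 2`, for every `c` of type `t` and every `v` with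
`d(v,c) = k−1` we have `O(c,w) ≤ Θ(v,c,1)` (in both cases `w` is the neighbour of `c` on
the geodesic from `c` to `v`).  Then for every `c` of type `t` and every `v` with
`d(v,c) = k` we have `O(c,w) ≤ Θ(v,c,0)`. -/
theorem type_swap_soluble_residual
    {V : Type*} (T : SimpleGraph V) (hconn : T.Connected) (hacyc : T.IsAcyclic)
    (hthick : Thick T) (hlf : ∀ u : V, (T.neighborSet u).Finite)
    (G : Subgroup (Equiv.Perm V)) (hG : PreservesAdj T G)
    (hTDT : ∀ k', TypeDistTrans T G k')
    (o : V) (k : ℕ) (hk : 1 ≤ k)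
    (res : ∀ c w : V,
      ↥(G ⊓ ptStab {c} ⊓ ptStab {w}) →* Equiv.Perm {u : V // T.Adj c u ∧ u ≠ w})
    (hres : ∀ (c w : V) (g : ↥(G ⊓ ptStab {c} ⊓ ptStab {w}))
      (u : {u : V // T.Adj c u ∧ u ≠ w}),
      ((res c w g) u : V) = (g : Equiv.Perm V) (u : V))
    (ha : ∀ c v w : V, Odd (T.dist o c) → T.dist v c = k → T.Adj c w →
      T.dist c v = T.dist w v + 1 →
      ∀ Os : Subgroup (Equiv.Perm {u : V // T.Adj c u ∧ u ≠ w}),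
        IsSolubleResidualIn (res c w).range Os → Os ≤ Theta T G c w (res c w) v 1)
    (hb : 2 ≤ k → ∀ c v w : V, Even (T.dist o c) → T.dist v c = k - 1 → T.Adj c w →
      T.dist c v = T.dist w v + 1 →
      ∀ Os : Subgroup (Equiv.Perm {u : V // T.Adj c u ∧ u ≠ w}),
        IsSolubleResidualIn (res c w).range Os → Os ≤ Theta T G c w (res c w) v 1) :
    ∀ c v w : V, Even (T.dist o c) → T.dist v c = k → T.Adj c w →
      T.dist c v = T.dist w v + 1 →
      ∀ Os : Subgroup (Equiv.Perm {u : V // T.Adj c u ∧ u ≠ w}),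
        IsSolubleResidualIn (res c w).range Os → Os ≤ Theta T G c w (res c w) v 0 :=
  type_swap_soluble_residual_general T hconn hacyc hthick hlf G hG o k res hres ha hb
end
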